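/- arXiv:2108.02496 — 3 statements merged into one kernel-verified Lean document; each statement's English description precedes it below -/
import Mathlib

section
/- Let $Z \in \mathrm{GL}(n, \mathbb{C})$ be diagonal with distinct nonzero eigenvalues $z_1, \ldots, z_n$, let $t \in \mathbb{C}^\times$ be such that $z_i \neq t z_j$ for all $i, j$, and let $W = (1, \ldots, 1)^T$. Define $V \in \mathrm{Mat}(1 \times n, \mathbb{C})$ by $V_j = (1-t) t^{-n} \prod_{k \neq j} \frac{z_k - t z_j}{z_k - z_j}$. Then the matrix $t(\mathrm{Id}_n + W V) Z$ has characteristic polynomial equal to that of $Z$, i.e. $\det(Z - \lambda \mathrm{Id}_n) = \det(t Z + t W V Z - \lambda \mathrm{Id}_n)$ for all $\lambda \in \mathbb{C}$. -/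
/-!
Write `Z = diag z` and `c_j = t V_j z_j`. The matrix `t(Id + W V)Z - λ` is the diagonal matrix
`diag(t z_i - λ)` plus the rank-one matrix `W (c_j)`, so by the matrix determinant lemma its
determinant is `∏ (t z_i - λ) + ∑_j c_j ∏_{i ≠ j} (t z_i - λ)`. The polynomial
`∏ (z_i - λ) - ∏ (t z_i - λ)` has degree `< n`, hence equals its Lagrange interpolant at the
nodes `t z_j`; at these nodes it takes the values `(1 - t) z_j ∏_{k ≠ j} (z_k - t z_j)`, and the
resulting interpolation coefficients are exactly the `c_j`.
-/

open Polynomial Finset Matrix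

theorem Polynomial.degree_prod_C_sub_X_sub_prod_C_sub_X_lt {ι R : Type*} [CommRing R]
    [Nontrivial R] (s : Finset ι) (a b : ι → R) :
    (∏ i ∈ s, (C (a i) - X) - ∏ i ∈ s, (C (b i) - X)).degree < (#s : WithBot ℕ) := by
  have hnodal : ∀ c : ι → R, ∏ i ∈ s, (C (c i) - X) = (-1) ^ #s * Lagrange.nodal s c := by
    intro c
    rw [Lagrange.nodal, ← prod_neg]
    simp only [neg_sub]
  rw [hnodal, hnodal, ← mul_sub]
  calc _ ≤ (Lagrange.nodal s a - Lagrange.nodal s b).degree := by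
        rcases neg_one_pow_eq_or R[X] #s with h | h
        · rw [h, one_mul]
        · rw [h, neg_one_mul, degree_neg]
    _ < #s := degree_sub_lt_left (by rw [Lagrange.degree_nodal, Lagrange.degree_nodal])
        Lagrange.nodal_ne_zero
        (by rw [Lagrange.nodal_monic.leadingCoeff, Lagrange.nodal_monic.leadingCoeff])
        |>.trans_eq Lagrange.degree_nodal

theorem Lagrange.eval_eq_sum_eval_mul_prod {F ι : Type*} [Field F] [Fintype ι] [DecidableEq ι]
    {v : ι → F} (hv : Function.Injective v) {f : F[X]} (hf : f.degree < Fintype.card ι)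
    (x : F) :
    f.eval x = ∑ j, f.eval (v j) * ∏ i ∈ univ.erase j, (v i - x) / (v i - v j) := by
  conv_lhs => rw [eq_interpolate (f := f) (s := univ) hv.injOn (by rwa [card_univ])]
  simp only [interpolate_apply, eval_finsetSum, eval_mul, eval_C, Lagrange.basis, eval_prod,
    basisDivisor, eval_sub, eval_X]
  refine sum_congr rfl fun j _ => congrArg _ (prod_congr rfl fun i hi => ?_)
  rw [← neg_sub (v i) (v j), ← neg_sub (v i) x, inv_neg, neg_mul_neg, inv_mul_eq_div]

namespace Matrix

variable {K ι : Type*} [Field K] [Fintype ι] [DecidableEq ι]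

theorem det_diagonal_add_vecMulVec_of_ne_zero {d : ι → K} (hd : ∀ i, d i ≠ 0)
    (w u : ι → K) :
    (diagonal d + vecMulVec w u).det =
      ∏ i, d i + ∑ j, w j * u j * ∏ i ∈ univ.erase j, d i := by
  have hfactor : diagonal d + vecMulVec w u = diagonal d * (1 + vecMulVec (w / d) u) := by
    rw [Matrix.mul_add, Matrix.mul_one]
    congr 1
    ext i j
    rw [diagonal_mul, vecMulVec_apply, vecMulVec_apply, Pi.div_apply]
    field_simp [hd i]
  rw [hfactor, det_mul, det_diagonal, vecMulVec_eq Unit,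
    det_one_add_replicateCol_mul_replicateRow, mul_add, mul_one, dotProduct, mul_sum]
  refine congrArg _ (sum_congr rfl fun j _ => ?_)
  rw [← mul_prod_erase univ d (mem_univ j), Pi.div_apply]
  field_simp [hd j]

/-- Both sides are polynomial in a common shift `d - x` of the diagonal, and they agree whenever
the shifted diagonal is invertible. -/
theorem det_diagonal_add_vecMulVec [Infinite K] (d w u : ι → K) :
    (diagonal d + vecMulVec w u).det =
      ∏ i, d i + ∑ j, w j * u j * ∏ i ∈ univ.erase j, d i := by
  set p : K[X] :=
    (diagonal (fun i => C (d i) - X) + vecMulVec (C ∘ w) (C ∘ u)).det -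
      (∏ i, (C (d i) - X) + ∑ j, C (w j) * C (u j) * ∏ i ∈ univ.erase j, (C (d i) - X))
  have heval : ∀ x, p.eval x = (diagonal (fun i => d i - x) + vecMulVec w u).det -
      (∏ i, (d i - x) + ∑ j, w j * u j * ∏ i ∈ univ.erase j, (d i - x)) := by
    intro x
    simp only [p, eval_sub, eval_add, eval_finsetSum, eval_mul, eval_prod, eval_C, eval_X]
    congr 1
    rw [← coe_evalRingHom, RingHom.map_det]
    congr 1
    ext i j
    simp [diagonal_apply, apply_ite, vecMulVec_apply]
  have hp : p = 0 := by
    refine eq_zero_of_infinite_isRoot p ((Set.finite_range d).infinite_compl.mono fun x hx => ?_)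
    rw [Set.mem_ofPred_eq, IsRoot.def, heval, sub_eq_zero]
    exact det_diagonal_add_vecMulVec_of_ne_zero (fun i => sub_ne_zero.2 fun h => hx ⟨i, h⟩) w u
  simpa [hp, sub_eq_zero] using (heval 0).symm

end Matrix

theorem prod_sub_eq_prod_mul_sub_add_sum_mul_prod_erase {F ι : Type*} [Field F] [Fintype ι]
    [DecidableEq ι] {z : ι → F} (hz : Function.Injective z) {t : F} (ht : t ≠ 0) (x : F) :
    ∏ i, (z i - x) = ∏ i, (t * z i - x) +
      ∑ j, t * ((1 - t) * t⁻¹ ^ Fintype.card ι *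
        ∏ k ∈ univ.erase j, (z k - t * z j) / (z k - z j)) * z j *
        ∏ i ∈ univ.erase j, (t * z i - x) := by
  have hdeg := degree_prod_C_sub_X_sub_prod_C_sub_X_lt univ z (fun i => t * z i)
  rw [card_univ] at hdeg
  have hlagrange := Lagrange.eval_eq_sum_eval_mul_prod
    ((mul_right_injective₀ ht).comp hz) hdeg x
  simp only [Function.comp_apply, eval_sub, eval_prod, eval_C, eval_X] at hlagrange
  rw [← sub_eq_iff_eq_add', hlagrange]
  refine sum_congr rfl fun j _ => ?_
  have hD : ∏ i ∈ univ.erase j, (z i - z j) ≠ 0 :=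
    prod_ne_zero_iff.2 fun i hi => sub_ne_zero.2 (hz.ne (ne_of_mem_erase hi))
  have hR : ∏ i ∈ univ.erase j, (t * z i - t * z j) =
      t ^ #(univ.erase j) * ∏ i ∈ univ.erase j, (z i - z j) := by
    rw [← prod_const, ← prod_mul_distrib]
    exact prod_congr rfl fun i _ => by ring
  have hN : t ^ Fintype.card ι = t * t ^ #(univ.erase j) := by
    rw [← prod_const, ← card_univ, ← prod_const,
      mul_prod_erase univ (fun _ => t) (mem_univ j)]
  rw [prod_eq_zero (f := fun i => t * z i - t * z j) (mem_univ j) (sub_self _), sub_zero,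
    ← mul_prod_erase univ _ (mem_univ j), prod_div_distrib, prod_div_distrib, hR, inv_pow, hN]
  field_simp

theorem rank_one_perturbation_isospectral_general (n : ℕ) (z : Fin n → ℂ) (t : ℂ)
    (hzinj : Function.Injective z) (ht : t ≠ 0)
    (W : Matrix (Fin n) (Fin 1) ℂ) (hW : ∀ i, W i 0 = 1)
    (V : Matrix (Fin 1) (Fin n) ℂ)
    (hV : ∀ j, V 0 j = (1 - t) * t⁻¹ ^ n *
      ∏ k ∈ Finset.univ.erase j, (z k - t * z j) / (z k - z j)) :
    ∀ lam : ℂ,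
      (Matrix.diagonal z - lam • (1 : Matrix (Fin n) (Fin n) ℂ)).det =
      (t • Matrix.diagonal z + t • (W * V * Matrix.diagonal z)
        - lam • (1 : Matrix (Fin n) (Fin n) ℂ)).det := by
  intro lam
  have hmat : t • diagonal z + t • (W * V * diagonal z) - lam • 1 =
      diagonal (fun i => t * z i - lam) + vecMulVec 1 (fun j => t * V 0 j * z j) := by
    ext i j
    simp only [Matrix.sub_apply, Matrix.add_apply, Matrix.smul_apply, mul_diagonal]
    simp only [mul_apply, Fin.sum_univ_one, hW, diagonal_apply, one_apply, vecMulVec_apply,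
      Pi.one_apply, smul_eq_mul]
    split_ifs <;> ring
  rw [hmat, det_diagonal_add_vecMulVec, smul_one_eq_diagonal, diagonal_sub, det_diagonal,
    prod_sub_eq_prod_mul_sub_add_sum_mul_prod_erase hzinj ht lam, Fintype.card_fin]
  simp only [hV, Pi.one_apply, one_mul]

/-- Let `Z = diag(z₁,…,zₙ)` with the `zᵢ` nonzero and pairwise distinct, let `t ≠ 0` be such
that `zᵢ ≠ t·zⱼ` for all `i, j`, and let `W = (1,…,1)ᵀ`.  With
`Vⱼ = (1-t) t^{-n} ∏_{k≠j} (z_k - t z_j)/(z_k - z_j)`, the matrix `t(Id + W V)Z` is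
isospectral to `Z`:  `det(Z - λ·Id) = det(tZ + tWVZ - λ·Id)` for every `λ`. -/
theorem rank_one_perturbation_isospectral (n : ℕ) (z : Fin n → ℂ) (t : ℂ)
    (hz0 : ∀ i, z i ≠ 0) (hzinj : Function.Injective z) (ht : t ≠ 0)
    (hzt : ∀ i j, z i ≠ t * z j)
    (W : Matrix (Fin n) (Fin 1) ℂ) (hW : ∀ i, W i 0 = 1)
    (V : Matrix (Fin 1) (Fin n) ℂ)
    (hV : ∀ j, V 0 j = (1 - t) * t⁻¹ ^ n *
      ∏ k ∈ Finset.univ.erase j, (z k - t * z j) / (z k - z j)) :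
    ∀ lam : ℂ,
      (Matrix.diagonal z - lam • (1 : Matrix (Fin n) (Fin n) ℂ)).det =
      (t • Matrix.diagonal z + t • (W * V * Matrix.diagonal z)
        - lam • (1 : Matrix (Fin n) (Fin n) ℂ)).det :=
  rank_one_perturbation_isospectral_general n z t hzinj ht W hW V hV
end

section
/- Fix $m \geq 2$, $n \geq 1$, nonzero complex numbers $q_0, \ldots, q_{m-1}$ with $t := q_0 \cdots q_{m-1}$, and $\lambda_1, \ldots, \lambda_n \in \mathbb{C}^\times$ with $\lambda_i^m \neq t\lambda_j^m$ for all $i, j$. Set $t_r = q_0 q_1 \cdots q_r$ for $0 \leq r \leq m-1$, $t_{-1} = 1$. Given matrices $\mathbf{g}^0, \ldots, \mathbf{g}^{m-1} \in \mathrm{Mat}(n \times n, \mathbb{C})$, define for each $r \in \{0, \ldots, m-1\}$ the matrix $Z_r$ by $(Z_r)_{ij} = \sum_{s=0}^{r} \frac{t_r}{t_{s-1}} \frac{\lambda_i^{m+s-r-1}\lambda_j^{-(s-r-1)}}{\lambda_i^m - t\lambda_j^m}\, \mathbf{g}^s_{ij} + \sum_{s=r+1}^{m-1} \frac{t\, t_r}{t_{s-1}}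 \frac{\lambda_i^{s-r-1}\lambda_j^{m-(s-r-1)}}{\lambda_i^m - t\lambda_j^m}\, \mathbf{g}^s_{ij}$, and let $\Lambda = \mathrm{diag}(\lambda_1, \ldots, \lambda_n)$. Then the $m$ matrix equations $\Lambda Z_s \Lambda^{-1} = q_s Z_{s-1} + q_s \mathbf{g}^s$ hold for all $s \in \mathbb{Z}/m$ (indices of $Z$ taken mod $m$). -/
/-- Partial products `tpar q 0 = 1 = t_{-1}`, `tpar q (s+1) = q_0 ⋯ q_s = t_s`. -/
noncomputable def tpar (q : ℕ → ℂ) (s : ℕ) : ℂ := ∏ i ∈ Finset.range s, q i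

/-- The matrix `Z_r` defined by formula (4.11) of the paper:
`(Z_r)_{ij} = ∑_{s=0}^{r} (t_r/t_{s-1}) λ_i^{m+s-r-1} λ_j^{-(s-r-1)}/(λ_i^m - t λ_j^m) 𝐠^s_{ij}
  + ∑_{s=r+1}^{m-1} (t t_r/t_{s-1}) λ_i^{s-r-1} λ_j^{m-(s-r-1)}/(λ_i^m - t λ_j^m) 𝐠^s_{ij}`. -/
noncomputable def Zloc (m n : ℕ) (q : ℕ → ℂ) (t : ℂ) (lam : Fin n → ℂ)
    (g : ℕ → Matrix (Fin n) (Fin n) ℂ) (r : ℕ) : Matrix (Fin n) (Fin n) ℂ :=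
  Matrix.of fun i j =>
    (∑ s ∈ Finset.range (r + 1),
      (tpar q (r + 1) / tpar q s) *
        (lam i ^ (m + s - r - 1) * lam j ^ (r + 1 - s) / (lam i ^ m - t * lam j ^ m)) * g s i j)
    + ∑ s ∈ Finset.Icc (r + 1) (m - 1),
      (t * tpar q (r + 1) / tpar q s) *
        (lam i ^ (s - r - 1) * lam j ^ (m - (s - r - 1)) / (lam i ^ m - t * lam j ^ m)) * g s i j

/-!
Entrywise, `(Λ Z_s Λ⁻¹)_{ij} = λ_i (Z_s)_{ij} / λ_j`, so the equations reduce to a recursion for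
the coefficient of `𝐠^x_{ij}` in `(Z_r)_{ij}`. Conjugation raises the power of `λ_i` and lowers that
of `λ_j` by one, while `t_s = q_s t_{s-1}`; this matches the coefficients in `Z_s` and `Z_{s-1}`,
with `t_{m-1} = t` accounting for the wrap-around from `Z_0` to `Z_{m-1}`. The only discrepancy is
at `x = s`, where `q_s λ_i^m / (λ_i^m - t λ_j^m) - q_s t λ_j^m / (λ_i^m - t λ_j^m) = q_s` produces
the inhomogeneous term `q_s 𝐠^s`.
-/

open Finset

lemma tpar_succ (q : ℕ → ℂ) (s : ℕ) : tpar q (s + 1) = tpar q s * q s :=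
  prod_range_succ q s

lemma tpar_ne_zero {m : ℕ} {q : ℕ → ℂ} (hq : ∀ s, s < m → q s ≠ 0) {u : ℕ} (hu : u ≤ m) :
    tpar q u ≠ 0 :=
  prod_ne_zero_iff.mpr fun i hi => hq i ((mem_range.mp hi).trans_le hu)

namespace Zloc

section Coefficients

variable (m : ℕ) (q : ℕ → ℂ) (t a b : ℂ)

noncomputable def innerCoeff (r x : ℕ) : ℂ :=
  tpar q (r + 1) / tpar q x * (a ^ (m + x - r - 1) * b ^ (r + 1 - x) / (a ^ m - t * b ^ m))

noncomputable def outerCoeff (r x : ℕ) : ℂ :=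
  t * tpar q (r + 1) / tpar q x * (a ^ (x - r - 1) * b ^ (m - (x - r - 1)) / (a ^ m - t * b ^ m))

noncomputable def coeff (r x : ℕ) : ℂ :=
  if x ≤ r then innerCoeff m q t a b r x else outerCoeff m q t a b r x

variable {m q t a b}

lemma innerCoeff_conj (hb : b ≠ 0) {k x : ℕ} (hk : k + 1 < m) (hx : x ≤ k) :
    a * innerCoeff m q t a b (k + 1) x * b⁻¹ = q (k + 1) * innerCoeff m q t a b k x := by
  unfold innerCoeff
  rw [show m + x - k - 1 = (m + x - (k + 1) - 1) + 1 by omega,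
    show k + 1 + 1 - x = (k + 1 - x) + 1 by omega, pow_succ, pow_succ, tpar_succ q (k + 1)]
  field_simp

lemma outerCoeff_conj (hb : b ≠ 0) {k x : ℕ} (hkx : k + 1 < x) (hx : x < m) :
    a * outerCoeff m q t a b (k + 1) x * b⁻¹ = q (k + 1) * outerCoeff m q t a b k x := by
  obtain ⟨d, rfl⟩ : ∃ d, x = k + 2 + d := ⟨x - (k + 2), by omega⟩
  unfold outerCoeff
  rw [show k + 2 + d - k - 1 = d + 1 by omega, show k + 2 + d - (k + 1) - 1 = d by omega,
    show m - d = (m - (d + 1)) + 1 by omega, pow_succ, pow_succ, tpar_succ q (k + 1)]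
  field_simp

lemma outerCoeff_zero_conj (hb : b ≠ 0) (ht : tpar q m = t) {x : ℕ} (hx0 : 0 < x) (hx : x < m) :
    a * outerCoeff m q t a b 0 x * b⁻¹ = q 0 * innerCoeff m q t a b (m - 1) x := by
  unfold outerCoeff innerCoeff
  rw [show x - 0 - 1 = x - 1 by omega, show m + x - (m - 1) - 1 = (x - 1) + 1 by omega,
    show m - (x - 1) = (m - 1 + 1 - x) + 1 by omega, show m - 1 + 1 = m by omega, ht,
    pow_succ, pow_succ, zero_add, tpar_succ, tpar, prod_range_zero]
  field_simp

lemma innerCoeff_self_conj (hb : b ≠ 0) (hD : a ^ m ≠ t * b ^ m) (hm : 1 ≤ m) {k : ℕ}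
    (hk : tpar q (k + 1) ≠ 0) :
    a * innerCoeff m q t a b (k + 1) (k + 1) * b⁻¹
      = q (k + 1) * outerCoeff m q t a b k (k + 1) + q (k + 1) := by
  unfold innerCoeff outerCoeff
  rw [show m + (k + 1) - (k + 1) - 1 = m - 1 by omega, show k + 1 + 1 - (k + 1) = 1 by omega,
    show k + 1 - k - 1 = 0 by omega, tpar_succ q (k + 1), Nat.sub_zero, pow_zero, one_mul,
    mul_div_cancel_left₀ _ hk, mul_div_cancel_right₀ _ hk]
  have hD' : a ^ m - t * b ^ m ≠ 0 := sub_ne_zero.mpr hD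
  rw [← mul_pow_sub_one (by omega : m ≠ 0) a] at hD' ⊢
  field_simp
  ring

lemma innerCoeff_zero_self_conj (hb : b ≠ 0) (hD : a ^ m ≠ t * b ^ m) (hm : 1 ≤ m)
    (ht : tpar q m = t) :
    a * innerCoeff m q t a b 0 0 * b⁻¹ = q 0 * innerCoeff m q t a b (m - 1) 0 + q 0 := by
  unfold innerCoeff
  rw [show m + 0 - 0 - 1 = m - 1 by omega, show m + 0 - (m - 1) - 1 = 0 by omega,
    show m - 1 + 1 - 0 = m by omega, show m - 1 + 1 = m by omega, ht, zero_add, tpar_succ,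
    tpar, prod_range_zero, pow_zero, one_mul, one_mul, div_one, div_one]
  have hD' : a ^ m - t * b ^ m ≠ 0 := sub_ne_zero.mpr hD
  rw [← mul_pow_sub_one (by omega : m ≠ 0) a] at hD' ⊢
  field_simp
  ring

lemma coeff_conj {m : ℕ} {q : ℕ → ℂ} (hq : ∀ s, s < m → q s ≠ 0) (ht : tpar q m = t)
    (hb : b ≠ 0) (hD : a ^ m ≠ t * b ^ m) {s x : ℕ} (hs : s < m) (hx : x < m) :
    a * coeff m q t a b s x * b⁻¹
      = q s * coeff m q t a b ((s + m - 1) % m) x + if x = s then q s else 0 := by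
  unfold coeff
  rcases s with _ | k
  · rw [show (0 + m - 1) % m = m - 1 by rw [Nat.mod_eq_of_lt (by omega)]; omega,
      if_pos (show x ≤ m - 1 by omega)]
    rcases Nat.eq_zero_or_pos x with rfl | hx0
    · simp only [le_refl, if_true]
      exact innerCoeff_zero_self_conj hb hD (by omega) ht
    · rw [if_neg (by omega), if_neg (by omega), add_zero]
      exact outerCoeff_zero_conj hb ht hx0 hx
  · rw [show (k + 1 + m - 1) % m = k by
      rw [show k + 1 + m - 1 = k + m by omega, Nat.add_mod_right, Nat.mod_eq_of_lt (by omega)]]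
    rcases lt_trichotomy x (k + 1) with hlt | rfl | hgt
    · rw [if_pos (by omega), if_pos (by omega), if_neg (by omega), add_zero]
      exact innerCoeff_conj hb hs (by omega)
    · rw [if_pos le_rfl, if_neg (by omega), if_pos rfl]
      exact innerCoeff_self_conj hb hD (by omega) (tpar_ne_zero hq hs.le)
    · rw [if_neg (by omega), if_neg (by omega), if_neg (by omega), add_zero]
      exact outerCoeff_conj hb hgt hx

end Coefficients

lemma apply_eq_sum_coeff {m n : ℕ} (q : ℕ → ℂ) (t : ℂ) (lam : Fin n → ℂ)
    (g : ℕ → Matrix (Fin n) (Fin n) ℂ) {r : ℕ} (hr : r < m) (i j : Fin n) :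
    Zloc m n q t lam g r i j = ∑ x ∈ range m, coeff m q t (lam i) (lam j) r x * g x i j := by
  simp only [coeff, ite_mul, sum_ite]
  rw [show {x ∈ range m | x ≤ r} = range (r + 1) by
      ext; simp only [mem_filter, mem_range]; omega,
    show {x ∈ range m | ¬x ≤ r} = Icc (r + 1) (m - 1) by
      ext; simp only [mem_filter, mem_range, mem_Icc]; omega]
  rfl

end Zloc

theorem Zloc_solves_moment_map_general (m n : ℕ)
    (q : ℕ → ℂ) (hq : ∀ s, s < m → q s ≠ 0)
    (t : ℂ) (ht : t = ∏ s ∈ Finset.range m, q s)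
    (lam : Fin n → ℂ) (hlam : ∀ i, lam i ≠ 0)
    (hreg : ∀ i j, lam i ^ m ≠ t * lam j ^ m)
    (g : ℕ → Matrix (Fin n) (Fin n) ℂ) :
    ∀ s : ℕ, s < m →
      Matrix.diagonal lam * Zloc m n q t lam g s * Matrix.diagonal (fun i => (lam i)⁻¹)
        = q s • Zloc m n q t lam g ((s + m - 1) % m) + q s • g s := by
  intro s hs
  have hprev : (s + m - 1) % m < m := Nat.mod_lt _ (by omega)
  ext i j
  simp only [Matrix.mul_diagonal, Matrix.diagonal_mul, Matrix.add_apply, Matrix.smul_apply,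
    smul_eq_mul, Zloc.apply_eq_sum_coeff q t lam g hs, Zloc.apply_eq_sum_coeff q t lam g hprev]
  rw [mul_sum, sum_mul]
  calc ∑ x ∈ range m, lam i * (Zloc.coeff m q t (lam i) (lam j) s x * g x i j) * (lam j)⁻¹
      = ∑ x ∈ range m, (q s * Zloc.coeff m q t (lam i) (lam j) ((s + m - 1) % m) x
          + if x = s then q s else 0) * g x i j := by
        refine sum_congr rfl fun x hx => ?_
        rw [← Zloc.coeff_conj hq ht.symm (hlam j) (hreg i j) hs (mem_range.mp hx)]
        ring
    _ = _ := by
        simp only [add_mul, sum_add_distrib, mul_sum, mul_assoc, ite_mul, zero_mul,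
          sum_ite_eq', mem_range, hs, if_true]

/-- The matrices `Z_r` of `Zloc` solve the reduced moment map equations in the diagonal gauge:
`Λ Z_s Λ⁻¹ = q_s Z_{s-1} + q_s 𝐠^s` for all `s ∈ ℤ/m` (indices of `Z` taken mod `m`). -/
theorem Zloc_solves_moment_map (m n : ℕ) (hm : 2 ≤ m) (hn : 1 ≤ n)
    (q : ℕ → ℂ) (hq : ∀ s, s < m → q s ≠ 0)
    (t : ℂ) (ht : t = ∏ s ∈ Finset.range m, q s)
    (lam : Fin n → ℂ) (hlam : ∀ i, lam i ≠ 0)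
    (hreg : ∀ i j, lam i ^ m ≠ t * lam j ^ m)
    (g : ℕ → Matrix (Fin n) (Fin n) ℂ) :
    ∀ s : ℕ, s < m →
      Matrix.diagonal lam * Zloc m n q t lam g s * Matrix.diagonal (fun i => (lam i)⁻¹)
        = q s • Zloc m n q t lam g ((s + m - 1) % m) + q s • g s :=
  Zloc_solves_moment_map_general m n q hq t ht lam hlam hreg g
end

section
/- Let $N \geq 1$ and let $B, C, Y^{(b)}, Y^{(c)}, \Phi^{(b)}, \Phi^{(c)}$ be $N \times N$ complex matrix-valued smooth functions of two commuting flow parameters $t, \tau$ satisfying: $\frac{d Y^{(b)}}{dt} = 0$, $\frac{d\Phi^{(b)}}{dt} = 0$, $\frac{dY^{(c)}}{dt} = 0$, $\frac{d\Phi^{(c)}}{d\tau} = 0$, $\frac{dY^{(c)}}{d\tau} = 0$, $\frac{d\Phi^{(b)}}{d\tau} = -(Y^{(c)})^l \Phi^{(b)} + \Phi^{(b)} Y (Y^{(c)})^{l-1}\Phi^{(c)}$, $\frac{dY}{dt} = 0$, $\frac{dY}{d\tau} = 0$, $\frac{dX}{dt} = -(Y^{(b)})^{k-1}\Phi^{(b)}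 - (Y^{(b)})^k X$, $\frac{dX}{d\tau} = -(Y^{(c)})^{l-1}\Phi^{(c)} - (Y^{(c)})^l X$, where $Y^{(b)} = \Phi^{(b)} Y$, $Y^{(c)} = \Phi^{(c)} Y$, and additionally $\frac{dY^{(b)}}{d\tau} = -(Y^{(c)})^l Y^{(b)} + Y^{(b)}(Y^{(c)})^l$. Then the two flows commute on $X$: $\frac{d}{dt}\frac{d}{d\tau}X = \frac{d}{d\tau}\frac{d}{dt}X = (Y^{(c)})^l (Y^{(b)})^{k-1}\Phi^{(b)} + (Y^{(c)})^l (Y^{(b)})^k X$. -/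
/-!
`Y⁽ᶜ⁾` is constant, so `Q = (Y⁽ᶜ⁾)^l` is a fixed matrix, and the `τ`-flow moves the
`t`-velocity `A = ∂ₜX` by `∂_τ A = -Q A`. The difficulty is `∂ₜ ∂_τ X`, because nothing is
assumed about `∂ₜ Φ⁽ᶜ⁾`. With the integrating factor `E(τ) = exp(τ Q)`, the `t`-derivative `E A`
of `E X` does not depend on `τ`, so `E(τ) X(t, τ) - E(τ₀) X(t, τ₀)` does not depend on `t`;
differentiating it in `τ` shows that the forcing term `-(Y⁽ᶜ⁾)^{l-1} Φ⁽ᶜ⁾` of the `τ`-flow does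
not depend on `t`. Both mixed partials are then `-Q A`.
-/

open NormedSpace

section Calculus

variable {𝕜 𝔸 : Type*} [RCLike 𝕜] [NormedRing 𝔸] [NormedAlgebra 𝕜 𝔸]

theorem eq_of_forall_hasDerivAt_zero {E : Type*} [NormedAddCommGroup E] [NormedSpace 𝕜 E]
    {f : 𝕜 → E} (hf : ∀ x, HasDerivAt f 0 x) (a b : 𝕜) : f a = f b :=
  is_const_of_deriv_eq_zero (fun x => (hf x).differentiableAt) (fun x => (hf x).deriv) a b

theorem HasDerivAt.pow_of_lie {f : 𝕜 → 𝔸} {C : 𝔸} {x : 𝕜} (hf : HasDerivAt f ⁅f x, C⁆ x)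
    (m : ℕ) : HasDerivAt (fun y => f y ^ m) ⁅f x ^ m, C⁆ x := by
  induction m with
  | zero => simpa [Ring.lie_def] using hasDerivAt_const x (1 : 𝔸)
  | succ m ih =>
    convert ih.fun_mul hf using 1
    · simp only [pow_succ]
    · rw [pow_succ, Ring.lie_def, Ring.lie_def, Ring.lie_def]
      noncomm_ring

-- The `X`-component of the Hamiltonian vector field of `tr(yᵏ)/k`, with `y = φ Y`.
def flowField {R : Type*} [Ring R] (k : ℕ) (y φ x : R) : R :=
  -(y ^ (k - 1) * φ) - y ^ k * x

theorem hasDerivAt_flowField {k : ℕ} (hk : 1 ≤ k) {y φ x : 𝕜 → 𝔸} {Y Q R : 𝔸} {v : 𝕜}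
    (hy_def : y v = φ v * Y) (hy : HasDerivAt y ⁅y v, Q⁆ v)
    (hφ : HasDerivAt φ (-(Q * φ v) + φ v * Y * R) v) (hx : HasDerivAt x (-R - Q * x v) v) :
    HasDerivAt (fun w => flowField k (y w) (φ w) (x w))
      (-(Q * flowField k (y v) (φ v) (x v))) v := by
  refine (((hy.pow_of_lie (k - 1)).fun_mul hφ).fun_neg.fun_sub
    ((hy.pow_of_lie k).fun_mul hx)).congr_deriv ?_
  obtain ⟨j, rfl⟩ : ∃ j, k = j + 1 := ⟨k - 1, by omega⟩
  simp only [flowField, Nat.add_sub_cancel, pow_succ, hy_def, Ring.lie_def]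
  noncomm_ring

variable [CompleteSpace 𝔸]

theorem hasDerivAt_exp_smul_mul {g : 𝕜 → 𝔸} {Q d : 𝔸} {x : 𝕜}
    (hg : HasDerivAt g (d - Q * g x) x) :
    HasDerivAt (fun y => exp (y • Q) * g y) (exp (x • Q) * d) x := by
  convert (hasDerivAt_exp_smul_const Q x).fun_mul hg using 1
  noncomm_ring

theorem forcing_eq_of_hasDerivAt {X A D : 𝕜 → 𝕜 → 𝔸} {Q : 𝔸}
    (hX₁ : ∀ u v, HasDerivAt (fun u => X u v) (A u v) u)
    (hX₂ : ∀ u v, HasDerivAt (X u) (D u v - Q * X u v) v)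
    (hA₂ : ∀ u v, HasDerivAt (A u) (-(Q * A u v)) v) (u u' v : 𝕜) : D u v = D u' v := by
  have hA_const (s w : 𝕜) : exp (w • Q) * A s w = exp (v • Q) * A s v :=
    eq_of_forall_hasDerivAt_zero (fun w => by
      simpa using hasDerivAt_exp_smul_mul (d := (0 : 𝔸)) (by simpa using hA₂ s w)) w v
  have hX_shift (w : 𝕜) : exp (w • Q) * X u w - exp (v • Q) * X u v
      = exp (w • Q) * X u' w - exp (v • Q) * X u' v :=
    eq_of_forall_hasDerivAt_zero (fun s => by
      simpa [hA_const] using ((hX₁ s w).const_mul (exp (w • Q))).sub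
        ((hX₁ s v).const_mul (exp (v • Q)))) u u'
  have hderiv (s : 𝕜) : HasDerivAt (fun w => exp (w • Q) * X s w - exp (v • Q) * X s v)
      (exp (v • Q) * D s v) v :=
    (hasDerivAt_exp_smul_mul (hX₂ s v)).sub_const _
  have hderiv_u := hderiv u
  simp only [hX_shift] at hderiv_u
  have hunit : IsUnit (exp (v • Q)) :=
    isUnit_exp_of_mem_ball (𝕂 := 𝕜) ((expSeries_radius_eq_top 𝕜 𝔸).symm ▸ edist_lt_top _ _)
  exact hunit.mul_left_cancel (hderiv_u.unique (hderiv u'))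

end Calculus

-- Any matrix norm would do: it only serves to do calculus in the matrix algebra.
attribute [local instance] Matrix.linftyOpNormedAddCommGroup Matrix.linftyOpNormedSpace
  Matrix.linftyOpNormedRing Matrix.linftyOpNormedAlgebra

theorem Matrix.hasDerivAt_iff {𝕜 α m n : Type*} [NontriviallyNormedField 𝕜]
    [NormedAddCommGroup α] [NormedSpace 𝕜 α] [Fintype m] [Fintype n] {f : 𝕜 → Matrix m n α}
    {f' : Matrix m n α} {x : 𝕜} :
    HasDerivAt f f' x ↔ ∀ i j, HasDerivAt (fun y => f y i j) (f' i j) x := by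
  let e : Matrix m n α ≃L[𝕜] (m → n → α) :=
    { (Matrix.ofLinearEquiv 𝕜).symm with
      continuous_toFun := continuous_id
      continuous_invFun := continuous_id }
  have key : HasDerivAt f f' x ↔ HasDerivAt (e ∘ f) (e f') x :=
    ⟨fun h => e.hasFDerivAt.comp_hasDerivAt x h,
      fun h => e.symm.hasFDerivAt.comp_hasDerivAt x h⟩
  simp only [key, hasDerivAt_pi]
  rfl

theorem flows_commute_on_X_general (N k l : ℕ) (hk : 1 ≤ k)
    (X Y Yb Yc Pb Pc : ℝ → ℝ → Matrix (Fin N) (Fin N) ℂ)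
    (hYbdef : ∀ t τ, Yb t τ = Pb t τ * Y t τ)
    (hYc_t : ∀ (t τ : ℝ) (i j : Fin N), HasDerivAt (fun u : ℝ => Yc u τ i j) 0 t)
    (hYc_τ : ∀ (t τ : ℝ) (i j : Fin N), HasDerivAt (fun v : ℝ => Yc t v i j) 0 τ)
    (hPb_τ : ∀ (t τ : ℝ) (i j : Fin N), HasDerivAt (fun v : ℝ => Pb t v i j)
      ((-((Yc t τ) ^ l * Pb t τ) + Pb t τ * Y t τ * (Yc t τ) ^ (l - 1) * Pc t τ) i j) τ)
    (hYb_τ : ∀ (t τ : ℝ) (i j : Fin N), HasDerivAt (fun v : ℝ => Yb t v i j)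
      ((-((Yc t τ) ^ l * Yb t τ) + Yb t τ * (Yc t τ) ^ l) i j) τ)
    (hX_t : ∀ (t τ : ℝ) (i j : Fin N), HasDerivAt (fun u : ℝ => X u τ i j)
      ((-((Yb t τ) ^ (k - 1) * Pb t τ) - (Yb t τ) ^ k * X t τ) i j) t)
    (hX_τ : ∀ (t τ : ℝ) (i j : Fin N), HasDerivAt (fun v : ℝ => X t v i j)
      ((-((Yc t τ) ^ (l - 1) * Pc t τ) - (Yc t τ) ^ l * X t τ) i j) τ) :
    ∀ (t τ : ℝ) (i j : Fin N),
      deriv (fun u : ℝ => deriv (fun v : ℝ => X u v i j) τ) t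
        = ((Yc t τ) ^ l * (Yb t τ) ^ (k - 1) * Pb t τ
            + (Yc t τ) ^ l * (Yb t τ) ^ k * X t τ) i j ∧
      deriv (fun v : ℝ => deriv (fun u : ℝ => X u v i j) t) τ
        = ((Yc t τ) ^ l * (Yb t τ) ^ (k - 1) * Pb t τ
            + (Yc t τ) ^ l * (Yb t τ) ^ k * X t τ) i j := by
  intro t τ i j
  have hYc (u v : ℝ) : Yc u v = Yc t τ := by
    ext a b
    exact (eq_of_forall_hasDerivAt_zero (hYc_τ u · a b) v τ).trans
      (eq_of_forall_hasDerivAt_zero (hYc_t · τ a b) u t)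
  set Q := Yc t τ ^ l
  set A := fun u v => flowField k (Yb u v) (Pb u v) (X u v)
  have hX₁ (u v : ℝ) : HasDerivAt (fun u => X u v) (A u v) u :=
    Matrix.hasDerivAt_iff.2 (hX_t u v)
  have hX₂ (u v : ℝ) : HasDerivAt (X u) (-(Yc t τ ^ (l - 1) * Pc u v) - Q * X u v) v := by
    simpa only [hYc] using Matrix.hasDerivAt_iff.2 (hX_τ u v)
  have hA₂ (u v : ℝ) : HasDerivAt (A u) (-(Q * A u v)) v := by
    refine hasDerivAt_flowField hk (hYbdef u v) ?_ ?_ (hX₂ u v)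
    · have h := Matrix.hasDerivAt_iff.2 (hYb_τ u v)
      rwa [hYc, neg_add_eq_sub, ← Ring.lie_def] at h
    · have h := Matrix.hasDerivAt_iff.2 (hPb_τ u v)
      rwa [hYc, mul_assoc _ _ (Pc u v)] at h
  have hforcing := forcing_eq_of_hasDerivAt hX₁ hX₂ hA₂
  have hvalue : -(Q * A t τ) = Q * Yb t τ ^ (k - 1) * Pb t τ + Q * Yb t τ ^ k * X t τ := by
    simp only [A, flowField]
    noncomm_ring
  constructor
  · have hfun : (fun u => deriv (fun v => X u v i j) τ)
        = fun u => (-(Yc t τ ^ (l - 1) * Pc t τ) - Q * X u τ) i j := by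
      funext u
      rw [(Matrix.hasDerivAt_iff.1 (hX₂ u τ) i j).deriv, hforcing u t τ]
    have h := ((hX₁ t τ).const_mul Q).const_sub (-(Yc t τ ^ (l - 1) * Pc t τ))
    rw [hfun, (Matrix.hasDerivAt_iff.1 h i j).deriv, ← hvalue]
  · have hfun : (fun v => deriv (fun u => X u v i j) t) = fun v => A t v i j :=
      funext fun v => (Matrix.hasDerivAt_iff.1 (hX₁ t v) i j).deriv
    rw [hfun, (Matrix.hasDerivAt_iff.1 (hA₂ t τ) i j).deriv, hvalue]

/-- Commutativity of the two Hamiltonian flows (end of Section 3 of the paper): given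
matrix-valued functions `X, Y, Y⁽ᵇ⁾, Y⁽ᶜ⁾, Φ⁽ᵇ⁾, Φ⁽ᶜ⁾` of two flow parameters `t, τ`
satisfying the listed evolution equations, the mixed second partial derivatives of `X`
agree and equal `(Y⁽ᶜ⁾)^l (Y⁽ᵇ⁾)^{k-1} Φ⁽ᵇ⁾ + (Y⁽ᶜ⁾)^l (Y⁽ᵇ⁾)^k X`. -/
theorem flows_commute_on_X (N k l : ℕ) (hk : 1 ≤ k) (hl : 1 ≤ l)
    (X Y Yb Yc Pb Pc : ℝ → ℝ → Matrix (Fin N) (Fin N) ℂ)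
    (hYbdef : ∀ t τ, Yb t τ = Pb t τ * Y t τ)
    (hYcdef : ∀ t τ, Yc t τ = Pc t τ * Y t τ)
    (hY_t : ∀ (t τ : ℝ) (i j : Fin N), HasDerivAt (fun u : ℝ => Y u τ i j) 0 t)
    (hY_τ : ∀ (t τ : ℝ) (i j : Fin N), HasDerivAt (fun v : ℝ => Y t v i j) 0 τ)
    (hYb_t : ∀ (t τ : ℝ) (i j : Fin N), HasDerivAt (fun u : ℝ => Yb u τ i j) 0 t)
    (hPb_t : ∀ (t τ : ℝ) (i j : Fin N), HasDerivAt (fun u : ℝ => Pb u τ i j) 0 t)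
    (hYc_t : ∀ (t τ : ℝ) (i j : Fin N), HasDerivAt (fun u : ℝ => Yc u τ i j) 0 t)
    (hYc_τ : ∀ (t τ : ℝ) (i j : Fin N), HasDerivAt (fun v : ℝ => Yc t v i j) 0 τ)
    (hPc_τ : ∀ (t τ : ℝ) (i j : Fin N), HasDerivAt (fun v : ℝ => Pc t v i j) 0 τ)
    (hPb_τ : ∀ (t τ : ℝ) (i j : Fin N), HasDerivAt (fun v : ℝ => Pb t v i j)
      ((-((Yc t τ) ^ l * Pb t τ) + Pb t τ * Y t τ * (Yc t τ) ^ (l - 1) * Pc t τ) i j) τ)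
    (hYb_τ : ∀ (t τ : ℝ) (i j : Fin N), HasDerivAt (fun v : ℝ => Yb t v i j)
      ((-((Yc t τ) ^ l * Yb t τ) + Yb t τ * (Yc t τ) ^ l) i j) τ)
    (hX_t : ∀ (t τ : ℝ) (i j : Fin N), HasDerivAt (fun u : ℝ => X u τ i j)
      ((-((Yb t τ) ^ (k - 1) * Pb t τ) - (Yb t τ) ^ k * X t τ) i j) t)
    (hX_τ : ∀ (t τ : ℝ) (i j : Fin N), HasDerivAt (fun v : ℝ => X t v i j)
      ((-((Yc t τ) ^ (l - 1) * Pc t τ) - (Yc t τ) ^ l * X t τ) i j) τ) :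
    ∀ (t τ : ℝ) (i j : Fin N),
      deriv (fun u : ℝ => deriv (fun v : ℝ => X u v i j) τ) t
        = ((Yc t τ) ^ l * (Yb t τ) ^ (k - 1) * Pb t τ
            + (Yc t τ) ^ l * (Yb t τ) ^ k * X t τ) i j ∧
      deriv (fun v : ℝ => deriv (fun u : ℝ => X u v i j) t) τ
        = ((Yc t τ) ^ l * (Yb t τ) ^ (k - 1) * Pb t τ
            + (Yc t τ) ^ l * (Yb t τ) ^ k * X t τ) i j :=
  flows_commute_on_X_general N k l hk X Y Yb Yc Pb Pc hYbdef hYc_t hYc_τ hPb_τ hYb_τ hX_t hX_τ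
end
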